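/- Let κ ∈ ℤ. If κ ≥ 2, then 𝐛β_{κ−1,1}(r) ∼ 2r² log r as r → 0⁺ (i.e. lim_{r→0⁺} 𝐛β_{κ−1,1}(r)/(r² log r) = 2). If κ < 2, then 𝐛β_{κ−1,1}(r) ∼ ((2−κ)/2)·r⁴ as r → 0⁺ (i.e. lim_{r→0⁺} 𝐛β_{κ−1,1}(r)/r⁴ = (2−κ)/2). -/

import Mathlib

open MeasureTheory Filter intervalIntegral

/-- The generalized binomial coefficient `C(x, n) = x(x−1)⋯(x−n+1)/n!` for `x ∈ ℤ`. -/
noncomputable def genBinom (x : ℤ) (n : ℕ) : ℝ :=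
  (∏ j ∈ Finset.range n, ((x : ℝ) - (j : ℝ))) / (n.factorial : ℝ)

/-- `β(w; a, b) := −Σ'_{n≠−b} ((−1)ⁿ/(n+b)) C(a−1,n) (1−w)^{n+b}
  − (−1)^b 𝟙[a ≥ 1 ∧ 0 ≤ −b < a] log(1−w)`. -/
noncomputable def betaFn (w : ℝ) (a b : ℤ) : ℝ :=
  -(∑' n : ℕ, if (n : ℤ) = -b then 0
      else ((-1 : ℝ) ^ n / ((n : ℝ) + (b : ℝ))) * genBinom (a - 1) n * (1 - w) ^ ((n : ℤ) + b))
    - (-1 : ℝ) ^ b * (if 1 ≤ a ∧ 0 ≤ -b ∧ -b < a then (1 : ℝ) else 0) * Real.log (1 - w)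

/-- `𝐛β_{a,b}(r) := −2 ∫₀^r t^{2b−1} (1−t²)^{−a−1} β(1−t²; a, 1−b) dt`. -/
noncomputable def bbeta (a b : ℤ) (r : ℝ) : ℝ :=
  -2 * ∫ t in (0 : ℝ)..r, t ^ (2 * b - 1) * (1 - t ^ 2) ^ (-a - 1) * betaFn (1 - t ^ 2) a (1 - b)

/-!
With `x = t²`, the series part of `β(1 - x; κ - 1, 0)` is `x h(x)` for the power series
`h = betaSeries (κ - 2)`, which converges near `0` because `|C(a, n)| ≤ (|a| + 1)ⁿ` and has
`h(0) = 2 - κ`. So near `0` the integrand of `𝐛β_{κ-1,1}` is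
`2 (1 - t²)^(-κ) (t³ h(t²) + 2 𝟙[κ ≥ 2] t log t)`, a continuous function, and l'Hôpital's rule
applied to its primitive against `r⁴` (when `κ < 2`) or `r² log r` (when `κ ≥ 2`) gives the limits.
-/

open Set Topology

lemma abs_genBinom_le (x : ℤ) (n : ℕ) : |genBinom x n| ≤ (|(x : ℝ)| + 1) ^ n := by
  have hprod : ∏ j ∈ Finset.range n, |(x : ℝ) - j| ≤ (|(x : ℝ)| + 1) ^ n * n.factorial := calc
    ∏ j ∈ Finset.range n, |(x : ℝ) - j| ≤ ∏ j ∈ Finset.range n, ((|(x : ℝ)| + 1) * (j + 1)) := by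
      refine Finset.prod_le_prod (fun _ _ => abs_nonneg _) fun j _ => ?_
      have : (0 : ℝ) ≤ |(x : ℝ)| * j := by positivity
      linarith [abs_sub ((x : ℝ)) j, abs_of_nonneg (Nat.cast_nonneg (α := ℝ) j)]
    _ = (|(x : ℝ)| + 1) ^ n * n.factorial := by
      rw [Finset.prod_mul_distrib, Finset.prod_const, Finset.card_range,
        ← Finset.prod_range_add_one_eq_factorial]
      push_cast
      rfl
  rw [genBinom, abs_div, Finset.abs_prod, Nat.abs_cast, div_le_iff₀ (by positivity)]
  exact hprod

noncomputable def betaCoeff (a : ℤ) (n : ℕ) : ℝ := (-1) ^ n / n * genBinom a n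

lemma abs_betaCoeff_le (a : ℤ) (n : ℕ) : |betaCoeff a n| ≤ (|(a : ℝ)| + 1) ^ n := by
  have hn : |(-1 : ℝ) ^ n / n| ≤ 1 := by
    rw [abs_div, abs_pow, abs_neg, abs_one, one_pow, Nat.abs_cast]
    rcases n.eq_zero_or_pos with rfl | hn
    · simp
    · exact div_le_one_of_le₀ (by exact_mod_cast hn) (Nat.cast_nonneg n)
  rw [betaCoeff, abs_mul]
  calc |(-1 : ℝ) ^ n / n| * |genBinom a n| ≤ 1 * (|(a : ℝ)| + 1) ^ n :=
        mul_le_mul hn (abs_genBinom_le a n) (abs_nonneg _) zero_le_one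
    _ = (|(a : ℝ)| + 1) ^ n := one_mul _

noncomputable def betaSeries (a : ℤ) (x : ℝ) : ℝ := ∑' n : ℕ, betaCoeff a (n + 1) * x ^ n

lemma norm_betaCoeff_succ_mul_pow_le (a : ℤ) (n : ℕ) {x ρ : ℝ} (hx : |x| ≤ ρ) :
    ‖betaCoeff a (n + 1) * x ^ n‖ ≤ (|(a : ℝ)| + 1) * (ρ * (|(a : ℝ)| + 1)) ^ n := by
  have hρ : 0 ≤ ρ := (abs_nonneg x).trans hx
  calc ‖betaCoeff a (n + 1) * x ^ n‖ = |betaCoeff a (n + 1)| * |x| ^ n := by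
        rw [Real.norm_eq_abs, abs_mul, abs_pow]
    _ ≤ (|(a : ℝ)| + 1) ^ (n + 1) * ρ ^ n :=
        mul_le_mul (abs_betaCoeff_le a _) (pow_le_pow_left₀ (abs_nonneg x) hx n)
          (by positivity) (by positivity)
    _ = (|(a : ℝ)| + 1) * (ρ * (|(a : ℝ)| + 1)) ^ n := by rw [mul_pow]; ring

lemma summable_geometric_bound (a : ℤ) {ρ : ℝ} (hρ0 : 0 ≤ ρ) (hρ : ρ * (|(a : ℝ)| + 1) < 1) :
    Summable fun n : ℕ => (|(a : ℝ)| + 1) * (ρ * (|(a : ℝ)| + 1)) ^ n :=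
  (summable_geometric_of_lt_one (by positivity) hρ).mul_left _

lemma summable_betaCoeff_mul_pow (a : ℤ) {x : ℝ} (hx : |x| * (|(a : ℝ)| + 1) < 1) :
    Summable fun n : ℕ => betaCoeff a n * x ^ n := by
  rw [← summable_nat_add_iff 1]
  refine ((summable_geometric_bound a (abs_nonneg x) hx).of_norm_bounded
    fun n => norm_betaCoeff_succ_mul_pow_le a n le_rfl).mul_right x |>.congr fun n => ?_
  rw [pow_succ]
  ring

lemma continuousOn_betaSeries (a : ℤ) {ρ : ℝ} (hρ : ρ * (|(a : ℝ)| + 1) < 1) :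
    ContinuousOn (betaSeries a) (Icc (-ρ) ρ) := by
  rcases lt_or_ge ρ 0 with hρ0 | hρ0
  · simp [Icc_eq_empty (by linarith : ¬ -ρ ≤ ρ)]
  refine continuousOn_tsum (fun n => (continuous_const.mul (continuous_pow n)).continuousOn)
    (summable_geometric_bound a hρ0 hρ) fun n x hx => ?_
  exact norm_betaCoeff_succ_mul_pow_le a n (abs_le.2 hx)

lemma betaSeries_zero (a : ℤ) : betaSeries a 0 = -a := by
  rw [betaSeries, tsum_eq_single 0 fun n hn => by simp [hn]]
  simp [betaCoeff, genBinom]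

lemma betaFn_one_sub (a : ℤ) {x : ℝ} (hx : |x| * (|(a : ℝ)| + 1) < 1) :
    betaFn (1 - x) (a + 1) 0 = -(x * betaSeries a x) - (if 0 ≤ a then 1 else 0) * Real.log x := by
  have hterm : (fun n : ℕ => if (n : ℤ) = -0 then (0 : ℝ)
      else (-1 : ℝ) ^ n / ((n : ℝ) + ((0 : ℤ) : ℝ)) * genBinom (a + 1 - 1) n
        * (1 - (1 - x)) ^ ((n : ℤ) + 0)) = fun n => betaCoeff a n * x ^ n := by
    funext n
    split_ifs with hn
    · simp [betaCoeff, show n = 0 by omega]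
    · rw [betaCoeff, add_zero, Int.cast_zero, add_zero, add_sub_cancel_right, sub_sub_cancel,
        zpow_natCast]
  have hind : (if 1 ≤ a + 1 ∧ 0 ≤ -(0 : ℤ) ∧ -(0 : ℤ) < a + 1 then (1 : ℝ) else 0)
      = if 0 ≤ a then 1 else 0 := if_congr (by omega) rfl rfl
  rw [betaFn, hterm, hind, (summable_betaCoeff_mul_pow a hx).tsum_eq_zero_add, betaSeries,
    ← tsum_mul_left]
  simp only [betaCoeff, Nat.cast_zero, div_zero, zero_mul, zero_add, zpow_zero, one_mul,
    sub_sub_cancel, pow_succ]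
  congr 3
  funext n
  ring

lemma eventually_continuousAt_betaSeries (a : ℤ) : ∀ᶠ x in 𝓝 0, ContinuousAt (betaSeries a) x := by
  set ρ : ℝ := (2 * (|(a : ℝ)| + 1))⁻¹
  have hρ0 : 0 < ρ := by positivity
  have hρ : ρ * (|(a : ℝ)| + 1) < 1 := by
    rw [mul_comm, ← div_eq_mul_inv, div_lt_one (by positivity)]
    linarith [abs_nonneg (a : ℝ)]
  filter_upwards [Ioo_mem_nhds (neg_neg_of_pos hρ0) hρ0] with x hx
  exact (continuousOn_betaSeries a hρ).continuousAt (Icc_mem_nhds hx.1 hx.2)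

noncomputable def bbetaDensity (κ : ℤ) (t : ℝ) : ℝ :=
  2 * (1 - t ^ 2) ^ (-κ) *
    (t ^ 3 * betaSeries (κ - 2) (t ^ 2) + (if 2 ≤ κ then 2 else 0) * (t * Real.log t))

lemma bbeta_eventuallyEq_integral (κ : ℤ) :
    bbeta (κ - 1) 1 =ᶠ[𝓝 0] fun r => ∫ t in (0 : ℝ)..r, bbetaDensity κ t := by
  set c : ℝ := |((κ - 2 : ℤ) : ℝ)| + 1
  have hlim : Tendsto (fun r : ℝ => r ^ 2 * c) (𝓝 0) (𝓝 0) :=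
    ((continuous_pow 2).mul continuous_const).tendsto' 0 0 (by simp)
  filter_upwards [hlim.eventually (gt_mem_nhds one_pos)] with r hr
  rw [bbeta, ← intervalIntegral.integral_const_mul]
  refine intervalIntegral.integral_congr fun t ht => ?_
  have ht2 : |t ^ 2| * c < 1 := by
    have : t ^ 2 ≤ r ^ 2 := by rcases Set.mem_uIcc.1 ht with h | h <;> nlinarith
    rw [abs_of_nonneg (sq_nonneg t)]
    nlinarith [abs_nonneg ((κ - 2 : ℤ) : ℝ)]
  have hκ : κ - 1 = κ - 2 + 1 := by ring
  have hind : (if 0 ≤ κ - 2 then (1 : ℝ) else 0) = if 2 ≤ κ then 1 else 0 :=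
    if_congr (by omega) rfl rfl
  simp only [hκ, sub_self, betaFn_one_sub (κ - 2) ht2, hind, Real.log_pow, bbetaDensity]
  rw [show -(κ - 2 + 1) - 1 = -κ by ring, show (2 * 1 - 1 : ℤ) = 1 by norm_num, zpow_one]
  split_ifs <;> push_cast <;> ring

lemma eventually_continuousAt_bbetaDensity (κ : ℤ) :
    ∀ᶠ t in 𝓝 0, ContinuousAt (bbetaDensity κ) t := by
  have hsq : Tendsto (fun t : ℝ => t ^ 2) (𝓝 0) (𝓝 0) := (continuous_pow 2).tendsto' 0 0 (by simp)
  filter_upwards [hsq.eventually (eventually_continuousAt_betaSeries (κ - 2)),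
    hsq.eventually (eventually_ne_nhds one_ne_zero.symm)] with t hh ht
  have hq : ContinuousAt (fun t : ℝ => (1 - t ^ 2) ^ (-κ)) t :=
    (continuous_const.sub (continuous_pow 2)).continuousAt.zpow₀ _ (Or.inl (sub_ne_zero.2 ht.symm))
  exact (continuousAt_const.mul hq).mul (((continuous_pow 3).continuousAt.mul
    (hh.comp (f := fun t : ℝ => t ^ 2) (continuous_pow 2).continuousAt)).add
    (continuousAt_const.mul Real.continuous_mul_log.continuousAt))

lemma eventually_hasDerivAt_integral {f : ℝ → ℝ} {a : ℝ} (hf : ∀ᶠ x in 𝓝 a, ContinuousAt f x) :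
    ∀ᶠ x in 𝓝 a, HasDerivAt (fun r => ∫ t in a..r, f t) (f x) x := by
  obtain ⟨ε, hε, hball⟩ := Metric.eventually_nhds_iff_ball.1 hf
  have hcont : ContinuousOn f (Metric.ball a ε) := fun x hx => (hball x hx).continuousWithinAt
  filter_upwards [Metric.ball_mem_nhds a hε] with x hx
  have hsub : uIcc a x ⊆ Metric.ball a ε := by
    rw [Real.ball_eq_Ioo] at hx ⊢
    exact ordConnected_Ioo.uIcc_subset (by simpa using hε) hx
  exact integral_hasDerivAt_right ((hcont.mono hsub).intervalIntegrable)
    (hcont.stronglyMeasurableAtFilter Metric.isOpen_ball x hx) (hball x hx)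

lemma tendsto_integral_div_of_tendsto_div_deriv {f g g' : ℝ → ℝ} {a L : ℝ}
    (hf : ∀ᶠ x in 𝓝 a, ContinuousAt f x) (hg : ∀ᶠ x in 𝓝[>] a, HasDerivAt g (g' x) x)
    (hg' : ∀ᶠ x in 𝓝[>] a, g' x ≠ 0) (hga : Tendsto g (𝓝[>] a) (𝓝 0))
    (hfg : Tendsto (fun x => f x / g' x) (𝓝[>] a) (𝓝 L)) :
    Tendsto (fun r => (∫ t in a..r, f t) / g r) (𝓝[>] a) (𝓝 L) := by
  have hF := eventually_hasDerivAt_integral hf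
  have hFa : Tendsto (fun r => ∫ t in a..r, f t) (𝓝[>] a) (𝓝 0) := by
    simpa using hF.self_of_nhds.continuousAt.tendsto.mono_left nhdsWithin_le_nhds
  exact HasDerivAt.lhopital_zero_nhdsGT (nhdsWithin_le_nhds hF) hg hg' hFa hga hfg

lemma tendsto_one_sub_sq_zpow (n : ℤ) : Tendsto (fun t : ℝ => (1 - t ^ 2) ^ n) (𝓝 0) (𝓝 1) := by
  have h : ContinuousAt (fun t : ℝ => (1 - t ^ 2) ^ n) 0 :=
    (continuous_const.sub (continuous_pow 2)).continuousAt.zpow₀ n (Or.inl (by norm_num))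
  simpa using h.tendsto

lemma tendsto_betaSeries_sq (a : ℤ) : Tendsto (fun t : ℝ => betaSeries a (t ^ 2)) (𝓝 0) (𝓝 (-a)) := by
  have h := (eventually_continuousAt_betaSeries a).self_of_nhds.tendsto.comp
    ((continuous_pow 2).tendsto' (0 : ℝ) 0 (by simp))
  rwa [betaSeries_zero] at h

lemma tendsto_bbetaDensity_div_of_lt_two {κ : ℤ} (hκ : κ < 2) :
    Tendsto (fun t => bbetaDensity κ t / (4 * t ^ 3)) (𝓝[>] 0) (𝓝 ((2 - (κ : ℝ)) / 2)) := by
  have h : Tendsto (fun t : ℝ => (1 - t ^ 2) ^ (-κ) * betaSeries (κ - 2) (t ^ 2) / 2) (𝓝 0)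
      (𝓝 ((2 - (κ : ℝ)) / 2)) := by
    convert ((tendsto_one_sub_sq_zpow (-κ)).mul (tendsto_betaSeries_sq (κ - 2))).div_const 2
      using 2
    push_cast
    ring
  refine (tendsto_nhdsWithin_of_tendsto_nhds h).congr' ?_
  filter_upwards [self_mem_nhdsWithin] with t (ht : 0 < t)
  simp only [bbetaDensity, if_neg (not_le.2 hκ)]
  field_simp
  ring

lemma tendsto_two_mul_log_add_one_atBot :
    Tendsto (fun t => 2 * Real.log t + 1) (𝓝[>] 0) atBot :=
  tendsto_atBot_add_const_right _ 1 (Real.tendsto_log_nhdsGT_zero.const_mul_atBot two_pos)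

lemma tendsto_bbetaDensity_div_of_two_le {κ : ℤ} (hκ : 2 ≤ κ) :
    Tendsto (fun t => bbetaDensity κ t / (t * (2 * Real.log t + 1))) (𝓝[>] 0) (𝓝 2) := by
  have hinv : Tendsto (fun t => (2 * Real.log t + 1)⁻¹) (𝓝[>] 0) (𝓝 0) :=
    tendsto_inv_atBot_zero.comp tendsto_two_mul_log_add_one_atBot
  have hsmall : Tendsto (fun t : ℝ => t ^ 2 * betaSeries (κ - 2) (t ^ 2) - 1) (𝓝 0) (𝓝 (-1)) := by
    simpa using (((continuous_pow 2).tendsto' (0 : ℝ) 0 (by simp)).mul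
      (tendsto_betaSeries_sq (κ - 2))).sub_const 1
  -- the quotient is `2 (1 - t²)^(-κ) (1 + (t² h(t²) - 1) / (2 log t + 1))`
  have h := (tendsto_nhdsWithin_of_tendsto_nhds (tendsto_one_sub_sq_zpow (-κ))).mul
    (((tendsto_nhdsWithin_of_tendsto_nhds hsmall).mul hinv).const_add 1)
  refine (h.const_mul 2).congr' ?_ |>.trans (by simp)
  filter_upwards [self_mem_nhdsWithin, tendsto_two_mul_log_add_one_atBot.eventually_lt_atBot 0]
    with t (ht : 0 < t) hlog
  simp only [bbetaDensity, if_pos hκ]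
  field_simp [hlog.ne]
  ring

lemma hasDerivAt_sq_mul_log {x : ℝ} (hx : x ≠ 0) :
    HasDerivAt (fun r => r ^ 2 * Real.log r) (x * (2 * Real.log x + 1)) x := by
  refine ((hasDerivAt_pow 2 x).mul (Real.hasDerivAt_log hx)).congr_deriv ?_
  field_simp
  ring

lemma tendsto_sq_mul_log : Tendsto (fun r => r ^ 2 * Real.log r) (𝓝[>] 0) (𝓝 0) := by
  have h := (continuous_id.mul Real.continuous_mul_log).tendsto' 0 0 (by simp)
  refine (tendsto_nhdsWithin_of_tendsto_nhds h).congr fun r => ?_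
  simp only [Pi.mul_apply, id]
  ring

/-- Corollary 5.5, case `m = −1`: if `κ ≥ 2` then `𝐛β_{κ−1,1}(r) ∼ 2r² log r`
as `r → 0⁺`, and if `κ < 2` then `𝐛β_{κ−1,1}(r) ∼ ((2−κ)/2) r⁴` as `r → 0⁺`. -/
theorem bbeta_asymp_neg_one (κ : ℤ) :
    (2 ≤ κ → Tendsto (fun r : ℝ => bbeta (κ - 1) 1 r / (r ^ 2 * Real.log r))
      (nhdsWithin 0 (Set.Ioi 0)) (nhds 2)) ∧
    (κ < 2 → Tendsto (fun r : ℝ => bbeta (κ - 1) 1 r / r ^ 4)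
      (nhdsWithin 0 (Set.Ioi 0)) (nhds ((2 - (κ : ℝ)) / 2))) := by
  have hF := (bbeta_eventuallyEq_integral κ).filter_mono (nhdsWithin_le_nhds (s := Ioi 0))
  have hf := eventually_continuousAt_bbetaDensity κ
  refine ⟨fun hκ => ?_, fun hκ => ?_⟩
  · have hg' : ∀ᶠ x in 𝓝[>] 0, x * (2 * Real.log x + 1) ≠ 0 := by
      filter_upwards [self_mem_nhdsWithin,
        tendsto_two_mul_log_add_one_atBot.eventually_lt_atBot 0] with x (hx : 0 < x) hlog
      exact mul_ne_zero hx.ne' hlog.ne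
    refine (tendsto_integral_div_of_tendsto_div_deriv hf ?_ hg' tendsto_sq_mul_log
      (tendsto_bbetaDensity_div_of_two_le hκ)).congr' (hF.symm.div EventuallyEq.rfl)
    exact eventually_nhdsWithin_of_forall fun x (hx : 0 < x) => hasDerivAt_sq_mul_log hx.ne'
  · refine (tendsto_integral_div_of_tendsto_div_deriv hf
      (Eventually.of_forall fun x => by simpa using hasDerivAt_pow 4 x)
      (eventually_nhdsWithin_of_forall fun x (hx : 0 < x) => by positivity)
      (tendsto_nhdsWithin_of_tendsto_nhds ((continuous_pow 4).tendsto' 0 0 (by simp)))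
      (tendsto_bbetaDensity_div_of_lt_two hκ)).congr' (hF.symm.div EventuallyEq.rfl)
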